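/- arXiv:2305.15489 — 2 statements merged into one kernel-verified Lean document; each statement's English description precedes it below -/
import Mathlib

section
/- For R ⊆ Σ* and $ ∉ Σ, the language ⋈_$(R) is the complement in (Σ∪{$})^ω of ∞($·(Σ*\R)·$), the set of words containing infinitely many disjoint infixes of the form $·y·$ with y ∈ Σ* \ R. -/
variable {A : Type}

/-- The infix `w[i..i+len-1]` of an infinite word. -/
def seg (w : ℕ → A) (i len : ℕ) : List A := List.ofFn fun k : Fin len => w (i + k)

/-- `∞K`: the words containing infinitely many disjoint infixes in `K`. -/
def InfInfix (K : Set (List A)) : Set (ℕ → A) :=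
  {w | ∀ N, ∃ i len, N ≤ i ∧ seg w i len ∈ K}

/-- `w` has a suffix in `($·R)^ω` (`$` is `none`). -/
def HasDollarRSuffix (R : Set (List A)) (w : ℕ → Option A) : Prop :=
  ∃ f : ℕ → ℕ, StrictMono f ∧ ∀ k, w (f k) = none ∧
    ∃ x ∈ R, (List.ofFn fun t : Fin (f (k + 1) - (f k + 1)) => w (f k + 1 + t)) = x.map some

/-- `⋈_$(R)`: the words over `Σ ∪ {$}` that either contain finitely many
`$`'s or have a suffix in `($·R)^ω`. -/
def Bowtie (R : Set (List A)) : Set (ℕ → Option A) :=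
  {w | (∀ N, ∃ i, N ≤ i ∧ w i = none) → HasDollarRSuffix R w}

/-! Past the first cut of a factorization of a suffix into `$·R`-blocks, every `$` is a cut
(the blocks contain no `$`), so the infixes `$·y·$` from there on are exactly the blocks and
all have `y ∈ R`. Conversely, if eventually every infix `$·y·$` has `y ∈ R` and there are
infinitely many `$`'s, cutting at all `$`'s from that point on (enumerated by `Nat.nth`)
factorizes a suffix. -/

open Filter

theorem List.exists_eq_map_some_iff {α : Type*} {l : List (Option α)} :
    (∃ x : List α, l = x.map some) ↔ none ∉ l := by
  simp only [eq_comm (a := l)]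
  induction l with
  | nil => simp
  | cons a l ih =>
    cases a with
    | none => simp [List.map_eq_cons_iff]
    | some a => simp [List.map_eq_cons_iff, ← ih]

theorem StrictMono.exists_le_lt_succ {f : ℕ → ℕ} (hf : StrictMono f) {j : ℕ}
    (hj : f 0 ≤ j) : ∃ k, f k ≤ j ∧ j < f (k + 1) := by
  classical
  have hex : ∃ m, j < f m := ⟨j + 1, (lt_add_one j).trans_le (hf.id_le _)⟩
  obtain ⟨k, hk⟩ : ∃ k, Nat.find hex = k + 1 :=
    Nat.exists_eq_add_one_of_ne_zero fun h ↦ (h ▸ Nat.find_spec hex).not_ge hj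
  exact ⟨k, not_lt.1 (Nat.find_min hex (by omega)), hk ▸ Nat.find_spec hex⟩

theorem length_seg (w : ℕ → A) (i n : ℕ) : (seg w i n).length = n := List.length_ofFn

theorem seg_add (w : ℕ → A) (i m n : ℕ) : seg w i (m + n) = seg w i m ++ seg w (i + m) n := by
  simp [seg, List.ofFn_add, add_assoc]

theorem seg_succ (w : ℕ → A) (i n : ℕ) : seg w i (n + 1) = w i :: seg w (i + 1) n := by
  simp [seg, List.ofFn_succ, add_comm, add_left_comm]

theorem seg_one (w : ℕ → A) (i : ℕ) : seg w i 1 = [w i] := by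
  simp [seg]

theorem exists_seg_eq_map_some_iff {w : ℕ → Option A} {i n : ℕ} :
    (∃ x : List A, seg w i n = x.map some) ↔ ∀ j, i ≤ j → j < i + n → w j ≠ none := by
  rw [List.exists_eq_map_some_iff, seg, List.mem_ofFn]
  constructor
  · rintro h j hij hjn hj
    exact h ⟨⟨j - i, by omega⟩, by simpa [Nat.add_sub_cancel' hij] using hj⟩
  · rintro h ⟨t, ht⟩
    exact h _ (Nat.le_add_right _ _) (by simp) ht

def HasDollarBlockAt (w : ℕ → Option A) (i : ℕ) (y : List A) : Prop :=
  w i = none ∧ seg w (i + 1) y.length = y.map some ∧ w (i + y.length + 1) = none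

theorem exists_seg_eq_iff_hasDollarBlockAt {w : ℕ → Option A} {i : ℕ} {y : List A} :
    (∃ n, seg w i n = none :: y.map some ++ [none]) ↔ HasDollarBlockAt w i y := by
  constructor
  · rintro ⟨n, h⟩
    obtain rfl : n = y.length + 1 + 1 := by simpa [length_seg] using congrArg List.length h
    rw [seg_add, seg_succ, seg_one, ← add_assoc] at h
    obtain ⟨h1, h2⟩ := List.append_inj h (by simp [length_seg])
    simp only [List.cons.injEq, and_true] at h1 h2
    exact ⟨h1.1, h1.2, h2⟩
  · rintro ⟨h0, hmid, hend⟩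
    exact ⟨y.length + 1 + 1, by rw [seg_add, seg_succ, seg_one, ← add_assoc, h0, hmid, hend]⟩

theorem mem_infInfix_iff_frequently_hasDollarBlockAt (S : Set (List A)) (w : ℕ → Option A) :
    w ∈ InfInfix {u | ∃ y : List A, y ∉ S ∧ u = none :: y.map some ++ [none]} ↔
      ∃ᶠ i in atTop, ∃ y ∉ S, HasDollarBlockAt w i y := by
  simp only [InfInfix, frequently_atTop, ← exists_seg_eq_iff_hasDollarBlockAt]
  exact forall_congr' fun N ↦ ⟨fun ⟨i, n, hi, y, hy, h⟩ ↦ ⟨i, hi, y, hy, n, h⟩,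
    fun ⟨i, hi, y, hy, n, h⟩ ↦ ⟨i, n, hi, y, hy, h⟩⟩

variable {R : Set (List A)} {w : ℕ → Option A}

theorem HasDollarRSuffix.eventually_mem_of_hasDollarBlockAt (h : HasDollarRSuffix R w) :
    ∀ᶠ i in atTop, ∀ y, HasDollarBlockAt w i y → y ∈ R := by
  obtain ⟨f, hf, hblock⟩ := h
  have gap : ∀ k j, f k < j → j < f (k + 1) → w j ≠ none := fun k j h1 h2 ↦ by
    obtain ⟨x, -, hx⟩ := (hblock k).2
    exact exists_seg_eq_map_some_iff.1 ⟨x, hx⟩ j h1 (by omega)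
  refine eventually_atTop.2 ⟨f 0, fun i hi y ⟨h0, hmid, hend⟩ ↦ ?_⟩
  obtain ⟨k, hk, hk'⟩ := hf.exists_le_lt_succ hi
  obtain rfl : f k = i := hk.eq_or_lt.resolve_right fun hlt ↦ gap k i hlt hk' h0
  have hnext : f (k + 1) = f k + y.length + 1 := by
    refine le_antisymm (not_lt.1 fun hlt ↦ gap k _ (by omega) hlt hend) (not_lt.1 fun hlt ↦ ?_)
    exact exists_seg_eq_map_some_iff.1 ⟨y, hmid⟩ _ (by omega) (by omega) (hblock (k + 1)).1
  obtain ⟨x, hxR, hx⟩ := (hblock k).2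
  change seg w (f k + 1) _ = _ at hx
  rw [show f (k + 1) - (f k + 1) = y.length by omega, hmid] at hx
  rwa [List.map_injective_iff.2 (Option.some_injective A) hx]

theorem hasDollarRSuffix_of_eventually_mem (hdollar : ∃ᶠ i in atTop, w i = none)
    (hR : ∀ᶠ i in atTop, ∀ y, HasDollarBlockAt w i y → y ∈ R) : HasDollarRSuffix R w := by
  obtain ⟨N, hN⟩ := eventually_atTop.1 hR
  set p : ℕ → Prop := fun j ↦ N ≤ j ∧ w j = none
  have hp : (Set.ofPred p).Infinite := Nat.frequently_atTop_iff_infinite.1 <|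
    (hdollar.and_eventually (eventually_ge_atTop N)).mono fun j hj ↦ ⟨hj.2, hj.1⟩
  set f := Nat.nth p
  have hf : StrictMono f := Nat.nth_strictMono hp
  have hmem : ∀ k, p (f k) := Nat.nth_mem_of_infinite hp
  refine ⟨f, hf, fun k ↦ ⟨(hmem k).2, ?_⟩⟩
  have gap : ∀ j, f k < j → j < f (k + 1) → w j ≠ none := fun j h1 h2 hj ↦
    (Nat.le_nth_of_lt_nth_succ h2 ⟨(hmem k).1.trans h1.le, hj⟩).not_gt h1
  have hlt := hf (lt_add_one k)
  obtain ⟨x, hx⟩ := (exists_seg_eq_map_some_iff (w := w) (n := f (k + 1) - (f k + 1))).2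
    fun j h1 h2 ↦ gap j h1 (by omega)
  have hlen : x.length = f (k + 1) - (f k + 1) := by
    simpa [length_seg] using (congrArg List.length hx).symm
  refine ⟨x, hN _ (hmem k).1 x ⟨(hmem k).2, hlen ▸ hx, ?_⟩, hx⟩
  rw [hlen, show f k + (f (k + 1) - (f k + 1)) + 1 = f (k + 1) by omega]
  exact (hmem (k + 1)).2

/-- `⋈_$(R)` is the complement of `∞($·(Σ*∖R)·$)`, the set of words with
infinitely many disjoint infixes of the form `$·y·$` with `y ∉ R`. -/
theorem bowtie_eq_compl_infinfix (R : Set (List A)) :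
    Bowtie R =
      (InfInfix {u : List (Option A) |
        ∃ y : List A, y ∉ R ∧ u = none :: y.map some ++ [none]})ᶜ := by
  ext w
  rw [Set.mem_compl_iff, mem_infInfix_iff_frequently_hasDollarBlockAt, not_frequently]
  simp only [not_exists, not_and, not_imp_not]
  refine ⟨fun hb ↦ ?_, fun hR hdollar ↦
    hasDollarRSuffix_of_eventually_mem (frequently_atTop.2 hdollar) hR⟩
  by_cases hdollar : ∃ᶠ i in atTop, w i = none
  · exact (hb (frequently_atTop.1 hdollar)).eventually_mem_of_hasDollarBlockAt
  · exact (not_frequently.1 hdollar).mono fun i hi y hy ↦ absurd hy.1 hi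
end

section
/- Every pruning of a semantically deterministic nondeterministic automaton on finite words to a deterministic automaton (choosing one initial state and, for each state and letter, one successor) yields an automaton recognizing the same language. -/
variable {A Q : Type}

/-- Extension of a transition function to sets of states and finite words. -/
def extSet (δ : Q → A → Set Q) : Set Q → List A → Set Q
  | S, [] => S
  | S, a :: u => extSet δ (⋃ q ∈ S, δ q a) u

/-- A nondeterministic automaton on finite words (NFW), with a total
transition function. -/
structure NFW (A Q : Type) where
  init : Set Q
  δ : Q → A → Set Q
  F : Set Q
  init_nonempty : init.Nonempty
  δ_nonempty : ∀ q a, (δ q a).Nonempty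

namespace NFW

/-- The language of finite words accepted from state `q`. -/
def LangFrom (N : NFW A Q) (q : Q) : Set (List A) :=
  {u | ∃ p ∈ extSet N.δ {q} u, p ∈ N.F}

/-- The language of the NFW. -/
def Lang (N : NFW A Q) : Set (List A) :=
  {u | ∃ p ∈ extSet N.δ N.init u, p ∈ N.F}

/-- Semantic determinism for NFWs. -/
def SD (N : NFW A Q) : Prop :=
  (∀ q₁ ∈ N.init, ∀ q₂ ∈ N.init, N.LangFrom q₁ = N.LangFrom q₂) ∧
  ∀ q a, ∀ q₁ ∈ N.δ q a, ∀ q₂ ∈ N.δ q a, N.LangFrom q₁ = N.LangFrom q₂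

end NFW

/-- Every pruning of a semantically deterministic NFW to a deterministic
automaton (choosing one initial state and one successor per state and letter)
recognizes the same language. -/
theorem sd_nfw_pruning (N : NFW A Q) (hSD : N.SD)
    (q0 : Q) (hq0 : q0 ∈ N.init)
    (d : Q → A → Q) (hd : ∀ q a, d q a ∈ N.δ q a) :
    {u : List A | List.foldl d q0 u ∈ N.F} = N.Lang := by
  have extSet_union : ∀ (u : List A) (S : Set Q),
      extSet N.δ S u = ⋃ q ∈ S, extSet N.δ {q} u := by
    intro u
    induction u with
    | nil => intro S; simp [extSet]
    | cons a u ih =>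
      intro S
      show extSet N.δ (⋃ q ∈ S, N.δ q a) u = ⋃ q ∈ S, extSet N.δ (⋃ p ∈ ({q} : Set Q), N.δ p a) u
      rw [ih]
      ext x
      constructor
      · intro hx
        rw [Set.mem_iUnion₂] at hx
        obtain ⟨p, hp, hx⟩ := hx
        rw [Set.mem_iUnion₂] at hp
        obtain ⟨q, hq, hpq⟩ := hp
        rw [Set.mem_iUnion₂]
        refine ⟨q, hq, ?_⟩
        rw [ih, Set.mem_iUnion₂]
        exact ⟨p, by simpa using hpq, hx⟩
      · intro hx
        rw [Set.mem_iUnion₂] at hx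
        obtain ⟨q, hq, hx⟩ := hx
        rw [ih, Set.mem_iUnion₂] at hx
        obtain ⟨p, hp, hx⟩ := hx
        simp only [Set.mem_iUnion₂, Set.mem_singleton_iff, exists_prop, exists_eq_left] at hp
        rw [Set.mem_iUnion₂]
        refine ⟨p, ?_, hx⟩
        rw [Set.mem_iUnion₂]
        exact ⟨q, hq, hp⟩
  have cons_iff : ∀ (q : Q) (a : A) (u : List A),
      (a :: u ∈ N.LangFrom q ↔ u ∈ N.LangFrom (d q a)) := by
    intro q a u
    have h1 : extSet N.δ {q} (a :: u) = extSet N.δ (N.δ q a) u := by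
      show extSet N.δ (⋃ p ∈ ({q} : Set Q), N.δ p a) u = _
      simp
    constructor
    · rintro ⟨p, hp, hpF⟩
      rw [h1, extSet_union] at hp
      simp only [Set.mem_iUnion] at hp
      obtain ⟨r, hr, hp⟩ := hp
      have := hSD.2 q a r hr (d q a) (hd q a)
      have : u ∈ N.LangFrom r := ⟨p, hp, hpF⟩
      rwa [hSD.2 q a r hr (d q a) (hd q a)] at this
    · rintro ⟨p, hp, hpF⟩
      refine ⟨p, ?_, hpF⟩
      rw [h1, extSet_union]
      simp only [Set.mem_iUnion]
      exact ⟨d q a, hd q a, hp⟩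
  have main : ∀ (u : List A) (q : Q), List.foldl d q u ∈ N.F ↔ u ∈ N.LangFrom q := by
    intro u
    induction u with
    | nil =>
      intro q
      constructor
      · intro h; exact ⟨q, rfl, h⟩
      · rintro ⟨p, hp, hpF⟩
        simp only [extSet, Set.mem_singleton_iff] at hp
        rwa [← hp]
    | cons a u ih =>
      intro q
      rw [List.foldl_cons, ih, cons_iff]
  have lang_eq : ∀ u : List A, u ∈ N.Lang ↔ u ∈ N.LangFrom q0 := by
    intro u
    constructor
    · rintro ⟨p, hp, hpF⟩
      rw [extSet_union] at hp
      simp only [Set.mem_iUnion] at hp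
      obtain ⟨r, hr, hp⟩ := hp
      have : u ∈ N.LangFrom r := ⟨p, hp, hpF⟩
      rwa [hSD.1 r hr q0 hq0] at this
    · rintro ⟨p, hp, hpF⟩
      refine ⟨p, ?_, hpF⟩
      rw [extSet_union]
      simp only [Set.mem_iUnion]
      exact ⟨q0, hq0, hp⟩
  ext u
  rw [Set.mem_setOf_eq, main u q0, lang_eq]
end
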